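/- Let (E,d) be a metric space, α ∈ (0,1], T > 0, and x : [0,T] → E a continuous path (extended constantly beyond T). Fix ε, γ, c > 0. Define τ₀ = 0 and inductively τₙ = inf{t > τₙ₋₁ : sup_{u,v ∈ [τₙ₋₁,t], |u−v| ≥ ε} d(x_u,x_v)/|u−v|^α ≥ γ}. Suppose that for every n ≥ 0, sup_{t ∈ [τₙ, τₙ+ε]} d(x_{τₙ}, x_t) < c. Then sup_{u,v ∈ [0,T], |u−v| = ε} d(x_u,x_v)/ε^α < max(3c·ε^{−α}, 4γ + c·ε^{−α}). -/

import Mathlib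

/-!
Between two consecutive stopping times τₙ ≤ u < τₙ₊₁ every pair at distance at least ε is
γ-Hölder, and by continuity this persists up to τₙ₊₁ itself. For a pair (u, u + ε) that
straddles τₙ₊₁ one goes through τₙ₊₁: the piece after it costs less than c, and the piece
before it is bounded either by stepping back by ε (two Hölder increments, of length ε and at
most 2ε) or, when u < τₙ + ε, by going through τₙ. Since the stopping times increase by at
least ε, every u lies in such a window. The bound is strict because the set of ratios is the
continuous image of a compact set, so its supremum is attained.
-/

open Set Filter Topology

theorem ContinuousOn.Ici_of_Icc_of_eq_const {E : Type*} [TopologicalSpace E] {x : ℝ → E}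
    {a b : ℝ} (hx : ContinuousOn x (Icc a b)) (hab : a ≤ b) (hext : ∀ t, b ≤ t → x t = x b) :
    ContinuousOn x (Ici a) := by
  have hmaps : MapsTo (fun t => min t b) (Ici a) (Icc a b) :=
    fun t ht => ⟨le_min ht hab, min_le_right _ _⟩
  refine (hx.comp (continuous_id.min continuous_const).continuousOn hmaps).congr fun t _ => ?_
  rcases le_total t b with h | h
  · simp [min_eq_left h]
  · simp [min_eq_right h, hext t h]

theorem IsCompact.sSup_lt_of_forall_lt {S : Set ℝ} {M : ℝ} (hS : IsCompact S) (hM : 0 < M)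
    (h : ∀ q ∈ S, q < M) : sSup S < M := by
  rcases S.eq_empty_or_nonempty with rfl | hne
  · rwa [Real.sSup_empty]
  · exact h _ (hS.sSup_mem hne)

theorem Real.rpow_le_two_mul_rpow {r ε α : ℝ} (hα : α ∈ Ioc 0 1) (hr : 0 ≤ r) (hε : 0 ≤ ε)
    (hrε : r ≤ 2 * ε) : r ^ α ≤ 2 * ε ^ α :=
  calc r ^ α ≤ (2 * ε) ^ α := Real.rpow_le_rpow hr hrε hα.1.le
    _ = 2 ^ α * ε ^ α := Real.mul_rpow zero_le_two hε
    _ ≤ 2 ^ (1 : ℝ) * ε ^ α := by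
        gcongr
        exacts [one_le_two, hα.2]
    _ = 2 * ε ^ α := by rw [Real.rpow_one]

theorem exists_le_and_imp_lt_succ {s : ℕ → ℝ} {P : ℕ → Prop} {ε u : ℝ} (hε : 0 < ε)
    (h0 : s 0 ≤ u) (hstep : ∀ n, P n → s n + ε ≤ s (n + 1)) :
    ∃ n, s n ≤ u ∧ (P n → u < s (n + 1)) := by
  by_contra! h
  have hgrow : ∀ n : ℕ, s n ≤ u ∧ s 0 + n * ε ≤ s n := by
    intro n
    induction n with
    | zero => simp [h0]
    | succ n ih =>
      obtain ⟨hP, hle⟩ := h n ih.1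
      have := hstep n hP
      push_cast
      exact ⟨hle, by linarith [ih.2]⟩
  obtain ⟨n, hn⟩ := exists_nat_gt ((u - s 0) / ε)
  rw [div_lt_iff₀ hε] at hn
  linarith [hgrow n]

section HolderStoppingTime

variable {E : Type*} [MetricSpace E] {x : ℝ → E} {α ε γ a b c u : ℝ}

def holderRatios (x : ℝ → E) (α ε a t : ℝ) : Set ℝ :=
  {q | ∃ u ∈ Icc a t, ∃ v ∈ Icc a t, ε ≤ |u - v| ∧ q = dist (x u) (x v) / |u - v| ^ α}

/-- The next Hölder stopping time after `a` is `sInf (holderTrigger x α ε γ a)`; beware that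
it is `sInf ∅ = 0` when this set is empty. -/
def holderTrigger (x : ℝ → E) (α ε γ a : ℝ) : Set ℝ :=
  {t | a < t ∧ γ ≤ sSup (holderRatios x α ε a t)}

theorem bddAbove_holderRatios (hx : ContinuousOn x (Icc a b)) (hε : 0 < ε) (hα : 0 ≤ α) :
    BddAbove (holderRatios x α ε a b) := by
  obtain ⟨M, hM⟩ := Metric.isBounded_iff.mp (isCompact_Icc.image_of_continuousOn hx).isBounded
  refine ⟨M / ε ^ α, ?_⟩
  rintro q ⟨u, hu, v, hv, hge, rfl⟩
  have hdist := hM (mem_image_of_mem x hu) (mem_image_of_mem x hv)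
  exact div_le_div₀ (dist_nonneg.trans hdist) hdist (Real.rpow_pos_of_pos hε α)
    (Real.rpow_le_rpow hε.le hge hα)

theorem bddBelow_holderTrigger : BddBelow (holderTrigger x α ε γ a) :=
  ⟨a, fun _ ht => ht.1.le⟩

theorem add_le_of_mem_holderTrigger {t : ℝ} (hγ : 0 < γ) (ht : t ∈ holderTrigger x α ε γ a) :
    a + ε ≤ t := by
  by_contra! hlt
  have hempty : holderRatios x α ε a t = ∅ := by
    refine eq_empty_iff_forall_notMem.mpr ?_
    rintro q ⟨u, hu, v, hv, hge, -⟩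
    have : |u - v| ≤ t - a :=
      abs_sub_le_iff.mpr ⟨by linarith [hu.2, hv.1], by linarith [hu.1, hv.2]⟩
    linarith
  have := ht.2
  rw [hempty, Real.sSup_empty] at this
  linarith

theorem add_le_sInf_holderTrigger (hγ : 0 < γ) (hne : (holderTrigger x α ε γ a).Nonempty) :
    a + ε ≤ sInf (holderTrigger x α ε γ a) :=
  le_csInf hne fun _ => add_le_of_mem_holderTrigger hγ

theorem dist_lt_of_notMem_holderTrigger {v : ℝ} (hx : ContinuousOn x (Icc a v)) (hε : 0 < ε)
    (hα : 0 ≤ α) (hau : a ≤ u) (huv : ε ≤ v - u) (hv : v ∉ holderTrigger x α ε γ a) :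
    dist (x u) (x v) < γ * (v - u) ^ α := by
  have hav : a < v := by linarith
  have hsup : sSup (holderRatios x α ε a v) < γ := not_le.mp fun h => hv ⟨hav, h⟩
  have habs : |u - v| = v - u := by rw [abs_sub_comm]; exact abs_of_nonneg (by linarith)
  have hmem : dist (x u) (x v) / (v - u) ^ α ∈ holderRatios x α ε a v :=
    ⟨u, ⟨hau, by linarith⟩, v, ⟨hav.le, le_rfl⟩, habs ▸ huv, by rw [habs]⟩
  have := (le_csSup (bddAbove_holderRatios hx hε hα) hmem).trans_lt hsup
  rwa [div_lt_iff₀ (Real.rpow_pos_of_pos (by linarith) α)] at this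

theorem dist_le_at_sInf_holderTrigger
    (hx : ContinuousOn x (Icc a (sInf (holderTrigger x α ε γ a)))) (hε : 0 < ε) (hα : 0 ≤ α)
    (hγ : 0 ≤ γ) (hau : a ≤ u) (hgap : ε < sInf (holderTrigger x α ε γ a) - u) :
    dist (x u) (x (sInf (holderTrigger x α ε γ a))) ≤
      γ * (sInf (holderTrigger x α ε γ a) - u) ^ α := by
  set σ := sInf (holderTrigger x α ε γ a)
  have hlim : Tendsto (fun v => dist (x u) (x v)) (𝓝[<] σ) (𝓝 (dist (x u) (x σ))) :=
    tendsto_const_nhds.dist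
      ((hx σ ⟨by linarith, le_rfl⟩).mono_of_mem_nhdsWithin (Icc_mem_nhdsLT (by linarith)))
  refine le_of_tendsto hlim
    (eventually_of_mem (Ioo_mem_nhdsLT (show u + ε < σ by linarith)) fun v hv => ?_)
  calc dist (x u) (x v) ≤ γ * (v - u) ^ α :=
        (dist_lt_of_notMem_holderTrigger (hx.mono (Icc_subset_Icc_right hv.2.le)) hε hα hau
          (by linarith [hv.1]) (notMem_of_lt_csInf hv.2 bddBelow_holderTrigger)).le
    _ ≤ γ * (σ - u) ^ α := by gcongr <;> linarith [hv.1, hv.2]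

theorem dist_lt_max_at_sInf_holderTrigger (hx : ContinuousOn x (Ici a)) (hε : 0 < ε)
    (hα : α ∈ Ioc 0 1) (hγ : 0 < γ) (hne : (holderTrigger x α ε γ a).Nonempty)
    (hca : ∀ t ∈ Icc a (a + ε), dist (x a) (x t) < c) (hau : a ≤ u)
    (huσ : u < sInf (holderTrigger x α ε γ a)) (hσu : sInf (holderTrigger x α ε γ a) ≤ u + ε) :
    dist (x u) (x (sInf (holderTrigger x α ε γ a))) < max (2 * c) (4 * γ * ε ^ α) := by
  set σ := sInf (holderTrigger x α ε γ a)
  have hσ : a + ε ≤ σ := add_le_sInf_holderTrigger hγ hne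
  have hεα : 0 < ε ^ α := Real.rpow_pos_of_pos hε α
  have hto_σ : ∀ w, a ≤ w → ε < σ - w → σ - w ≤ 2 * ε → dist (x w) (x σ) ≤ 2 * γ * ε ^ α :=
    fun w haw hgap hle =>
      (dist_le_at_sInf_holderTrigger (hx.mono Icc_subset_Ici_self) hε hα.1.le hγ.le haw
        hgap).trans (by
          rw [mul_comm 2 γ, mul_assoc]
          exact mul_le_mul_of_nonneg_left
            (Real.rpow_le_two_mul_rpow hα (by linarith) hε.le hle) hγ.le)
  rcases le_or_gt (a + ε) u with hu | hu
  · have hback : dist (x (u - ε)) (x u) < γ * ε ^ α := by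
      simpa using dist_lt_of_notMem_holderTrigger (hx.mono Icc_subset_Ici_self) hε hα.1.le
        (u := u - ε) (by linarith) (by simp) (notMem_of_lt_csInf huσ bddBelow_holderTrigger)
    have hfwd := hto_σ (u - ε) (by linarith) (by linarith) (by linarith)
    calc dist (x u) (x σ) ≤ dist (x (u - ε)) (x u) + dist (x (u - ε)) (x σ) :=
          dist_triangle_left _ _ _
      _ < 4 * γ * ε ^ α := by nlinarith
      _ ≤ _ := le_max_right _ _
  · have hau' := hca u ⟨hau, hu.le⟩
    rcases hσ.eq_or_lt with heq | hlt
    · have haσ := hca σ ⟨by linarith, heq.ge⟩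
      calc dist (x u) (x σ) ≤ dist (x a) (x u) + dist (x a) (x σ) := dist_triangle_left _ _ _
        _ < 2 * c := by linarith
        _ ≤ _ := le_max_left _ _
    · have haσ := hto_σ a le_rfl (by linarith) (by linarith)
      calc dist (x u) (x σ) ≤ dist (x a) (x u) + dist (x a) (x σ) := dist_triangle_left _ _ _
        _ < (2 * c + 4 * γ * ε ^ α) / 2 := by linarith
        _ ≤ _ := by linarith [le_max_left (2 * c) (4 * γ * ε ^ α),
            le_max_right (2 * c) (4 * γ * ε ^ α)]

theorem dist_add_lt_max_of_holderTrigger (hx : ContinuousOn x (Ici a)) (hε : 0 < ε)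
    (hα : α ∈ Ioc 0 1) (hγ : 0 < γ) (hca : ∀ t ∈ Icc a (a + ε), dist (x a) (x t) < c)
    (hcσ : ∀ t ∈ Icc (sInf (holderTrigger x α ε γ a)) (sInf (holderTrigger x α ε γ a) + ε),
      dist (x (sInf (holderTrigger x α ε γ a))) (x t) < c)
    (hau : a ≤ u) (huσ : (holderTrigger x α ε γ a).Nonempty → u < sInf (holderTrigger x α ε γ a)) :
    dist (x u) (x (u + ε)) < max (3 * c) (4 * γ * ε ^ α + c) := by
  set σ := sInf (holderTrigger x α ε γ a)
  have hc : 0 < c := dist_nonneg.trans_lt (hca a ⟨le_rfl, by linarith⟩)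
  have hεα : 0 < ε ^ α := Real.rpow_pos_of_pos hε α
  have hholder : u + ε ∉ holderTrigger x α ε γ a →
      dist (x u) (x (u + ε)) < max (3 * c) (4 * γ * ε ^ α + c) := fun hv =>
    (dist_lt_of_notMem_holderTrigger (hx.mono Icc_subset_Ici_self) hε hα.1.le hau (by simp)
      hv).trans_le (le_max_of_le_right (by rw [add_sub_cancel_left]; nlinarith))
  by_cases hne : (holderTrigger x α ε γ a).Nonempty
  swap
  · exact hholder fun hv => hne ⟨_, hv⟩
  rcases lt_or_ge (u + ε) σ with hv | hv
  · exact hholder (notMem_of_lt_csInf hv bddBelow_holderTrigger)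
  have hσv := hcσ (u + ε) ⟨hv, by linarith [huσ hne]⟩
  calc dist (x u) (x (u + ε)) ≤ dist (x u) (x σ) + dist (x σ) (x (u + ε)) := dist_triangle _ _ _
    _ < max (2 * c) (4 * γ * ε ^ α) + c :=
        add_lt_add (dist_lt_max_at_sInf_holderTrigger hx hε hα hγ hne hca hau (huσ hne) hv) hσv
    _ = max (3 * c) (4 * γ * ε ^ α + c) := by rw [← max_add_add_right]; ring_nf

end HolderStoppingTime

theorem dist_lt_of_sSup_dist_lt {E : Type*} [MetricSpace E] {x : ℝ → E} {a b c t : ℝ}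
    (hx : ContinuousOn x (Icc a b)) (h : sSup {q | ∃ t ∈ Icc a b, q = dist (x a) (x t)} < c)
    (ht : t ∈ Icc a b) : dist (x a) (x t) < c := by
  obtain ⟨M, hM⟩ := Metric.isBounded_iff.mp (isCompact_Icc.image_of_continuousOn hx).isBounded
  have hbdd : BddAbove {q | ∃ t ∈ Icc a b, q = dist (x a) (x t)} := ⟨M, by
    rintro q ⟨s, hs, rfl⟩
    exact hM (mem_image_of_mem x (left_mem_Icc.2 (ht.1.trans ht.2))) (mem_image_of_mem x hs)⟩
  exact (le_csSup hbdd ⟨t, ht, rfl⟩).trans_lt h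

theorem isCompact_setOf_dist_div_abs_sub_rpow_eq {E : Type*} [MetricSpace E] {x : ℝ → E}
    {a b α ε : ℝ} (hx : ContinuousOn x (Icc a b)) :
    IsCompact {q | ∃ u ∈ Icc a b, ∃ v ∈ Icc a b,
      |u - v| = ε ∧ q = dist (x u) (x v) / |u - v| ^ α} := by
  have himage : {q | ∃ u ∈ Icc a b, ∃ v ∈ Icc a b,
      |u - v| = ε ∧ q = dist (x u) (x v) / |u - v| ^ α} =
      (fun p : ℝ × ℝ => dist (x p.1) (x p.2) / ε ^ α) ''
        {p | p ∈ Icc a b ×ˢ Icc a b ∧ |p.1 - p.2| = ε} := by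
    ext q
    constructor
    · rintro ⟨u, hu, v, hv, huv, rfl⟩
      exact ⟨(u, v), ⟨⟨hu, hv⟩, huv⟩, by simp only [huv]⟩
    · rintro ⟨⟨u, v⟩, ⟨⟨hu, hv⟩, huv⟩, rfl⟩
      exact ⟨u, hu, v, hv, huv, by simp only [huv]⟩
  set K := {p : ℝ × ℝ | p ∈ Icc a b ×ˢ Icc a b ∧ |p.1 - p.2| = ε}
  have hK : IsCompact K := (isCompact_Icc.prod isCompact_Icc).inter_right
    (isClosed_eq (continuous_abs.comp (continuous_fst.sub continuous_snd)) continuous_const)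
  have hfst : MapsTo Prod.fst K (Icc a b) := fun _ hp => hp.1.1
  have hsnd : MapsTo Prod.snd K (Icc a b) := fun _ hp => hp.1.2
  rw [himage]
  exact hK.image_of_continuousOn
    ((continuous_dist.comp_continuousOn
      ((hx.comp continuousOn_fst hfst).prodMk (hx.comp continuousOn_snd hsnd))).div_const _)

theorem sSup_dist_div_lt_of_forall_dist_add_lt {E : Type*} [MetricSpace E] {x : ℝ → E}
    {a b α ε M : ℝ} (hx : ContinuousOn x (Icc a b)) (hε : 0 < ε) (hM : 0 < M)
    (h : ∀ u ∈ Icc a b, dist (x u) (x (u + ε)) < M) :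
    sSup {q | ∃ u ∈ Icc a b, ∃ v ∈ Icc a b,
      |u - v| = ε ∧ q = dist (x u) (x v) / |u - v| ^ α} < M / ε ^ α := by
  have hεα : 0 < ε ^ α := Real.rpow_pos_of_pos hε α
  refine (isCompact_setOf_dist_div_abs_sub_rpow_eq hx).sSup_lt_of_forall_lt
    (div_pos hM hεα) ?_
  rintro q ⟨u, hu, v, hv, huv, rfl⟩
  rw [huv, div_lt_div_iff_of_pos_right hεα]
  rcases le_total u v with huv' | hvu
  · obtain rfl : v = u + ε := by
      rw [abs_sub_comm, abs_of_nonneg (sub_nonneg.2 huv')] at huv; linarith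
    exact h u hu
  · obtain rfl : u = v + ε := by
      rw [abs_of_nonneg (sub_nonneg.2 hvu)] at huv; linarith
    rw [dist_comm]
    exact h v hv

/-- Lemma 2.2 (restricted Hölder norm bound via Hölder stopping times). -/
theorem stmt_0
    {E : Type*} [MetricSpace E]
    (α T ε γ c : ℝ) (hα : α ∈ Set.Ioc (0:ℝ) 1) (hT : 0 < T)
    (hε : 0 < ε) (hγ : 0 < γ) (hc : 0 < c)
    (x : ℝ → E) (hx : ContinuousOn x (Set.Icc 0 T))
    (hext : ∀ t, T ≤ t → x t = x T)
    (τ : ℕ → ℝ) (hτ0 : τ 0 = 0)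
    (hτ : ∀ n, τ (n+1) =
      sInf {t | τ n < t ∧ γ ≤
        sSup {q | ∃ u ∈ Set.Icc (τ n) t, ∃ v ∈ Set.Icc (τ n) t,
          ε ≤ |u - v| ∧ q = dist (x u) (x v) / |u - v| ^ α}})
    (hsup : ∀ n, sSup {q | ∃ t ∈ Set.Icc (τ n) (τ n + ε),
      q = dist (x (τ n)) (x t)} < c) :
    sSup {q | ∃ u ∈ Set.Icc (0:ℝ) T, ∃ v ∈ Set.Icc (0:ℝ) T,
        |u - v| = ε ∧ q = dist (x u) (x v) / |u - v| ^ α}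
      < max (3 * c * ε ^ (-α)) (4 * γ + c * ε ^ (-α)) := by
  have hτ' : ∀ n, τ (n + 1) = sInf (holderTrigger x α ε γ (τ n)) := hτ
  have hεα : 0 < ε ^ α := Real.rpow_pos_of_pos hε α
  have hcont : ContinuousOn x (Ici 0) := hx.Ici_of_Icc_of_eq_const hT.le hext
  have hτ_nonneg : ∀ n, 0 ≤ τ n := by
    intro n
    induction n with
    | zero => exact hτ0.ge
    | succ n ih => rw [hτ n]; exact Real.sInf_nonneg fun t ht => ih.trans ht.1.le
  have hcont_τ : ∀ n, ContinuousOn x (Ici (τ n)) := fun n =>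
    hcont.mono (Ici_subset_Ici.mpr (hτ_nonneg n))
  have hnear : ∀ n, ∀ t ∈ Icc (τ n) (τ n + ε), dist (x (τ n)) (x t) < c := fun n _ ht =>
    dist_lt_of_sSup_dist_lt ((hcont_τ n).mono Icc_subset_Ici_self) (hsup n) ht
  have hpair : ∀ u, 0 ≤ u → dist (x u) (x (u + ε)) < max (3 * c) (4 * γ * ε ^ α + c) := by
    intro u hu
    obtain ⟨n, hτu, hn⟩ := exists_le_and_imp_lt_succ
      (P := fun n => (holderTrigger x α ε γ (τ n)).Nonempty) hε (hτ0 ▸ hu)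
      fun n hne => (hτ' n).symm ▸ add_le_sInf_holderTrigger hγ hne
    rw [hτ' n] at hn
    exact dist_add_lt_max_of_holderTrigger (hcont_τ n) hε hα hγ (hnear n) (hτ' n ▸ hnear (n + 1))
      hτu hn
  have hbound : max (3 * c * ε ^ (-α)) (4 * γ + c * ε ^ (-α)) =
      max (3 * c) (4 * γ * ε ^ α + c) / ε ^ α := by
    rw [← max_div_div_right hεα.le, Real.rpow_neg hε.le]
    field_simp
  rw [hbound]
  exact sSup_dist_div_lt_of_forall_dist_add_lt hx hε (lt_max_of_lt_left (by positivity))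
    fun u hu => hpair u hu.1
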